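/- Let u = p/q with p, q positive coprime integers, 0 < u < 1, such that p* + q* is odd. Then μ_u is absolutely continuous with respect to Lebesgue measure, with density essentially bounded by 2q; equivalently, μ_u(A) ≤ 2q·(Lebesgue measure of A) for every measurable set A ⊆ ℝ. -/

import Mathlib

open MeasureTheory

/-- The product of Bernoulli(1/2) measures on `{0,1}^ℕ`, realized as the joint law of
the binary digits of a uniform random point of `[0,1)` (these digits are i.i.d.
Bernoulli(1/2), so this is exactly the infinite product of Bernoulli(1/2) measures). -/
noncomputable def bernoulliProd : Measure (ℕ → Bool) :=
  Measure.map (fun x j => decide (⌊x * 2 ^ (j + 1)⌋ % 2 = 1))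
    (volume.restrict (Set.Ico (0 : ℝ) 1))

/-- `μ_u`: the pushforward of the product of Bernoulli(1/2) measures on `({0,1}^ℕ)²`
under `(ε, ε') ↦ ∑_{j=1}^∞ (ε_j + u·ε'_j)·4^{-j}`. -/
noncomputable def muBes (u : ℝ) : Measure ℝ :=
  Measure.map
    (fun εε' : (ℕ → Bool) × (ℕ → Bool) =>
      ∑' j : ℕ, ((if εε'.1 j then (1 : ℝ) else 0) + u * (if εε'.2 j then (1 : ℝ) else 0))
        / 4 ^ (j + 1))
    (bernoulliProd.prod bernoulliProd)

/-- `n* `: the first nonzero digit from the right of `n` in base `b`,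
i.e. `(n / b^{j*}) % b` where `j*` is the largest `j` with `b^j ∣ n`. -/
def fstDigit (b n : ℕ) : ℕ := n / b ^ padicValNat b n % b

/-!
Realise the two Bernoulli sequences as the binary digits of independent uniform points `x, y`
of `[0,1)`, so that `μ_u` is the law of `S(x) + u S(y)`, where `S` reads binary digits in
base 4. On the dyadic square `[k/2ⁿ, (k+1)/2ⁿ) × [l/2ⁿ, (l+1)/2ⁿ)` the function
`q 4ⁿ (S(x) + (p/q) S(y))` stays within `(p+q)/3` above the integer label `q Φ(k) + p Φ(l)`,
where `Φ(k)` reads the binary digits of `k` in base 4. A difference `Φ(k) - Φ(k')` has even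
2-adic valuation, so if `v₂(p) + v₂(q)` is odd (which is what `p* + q*` odd means) the labels
of distinct squares are distinct integers. Hence `(a, b]` pulls back into at most
`q 4ⁿ (b - a) + (p+q)/3 + 1` squares of area `4⁻ⁿ`; letting `n → ∞` gives
`μ_u (a, b] ≤ q (b - a)`, and comparison with the Stieltjes construction of Lebesgue measure
gives `μ_u ≤ q • volume`.
-/

open Set Function

theorem StieltjesFunction.le_measure_of_forall_measure_Ioc_le {μ : Measure ℝ}
    (f : StieltjesFunction ℝ) (h : ∀ a b, a < b → μ (Ioc a b) ≤ ENNReal.ofReal (f b - f a)) :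
    μ ≤ f.measure := by
  rw [← Measure.toOuterMeasure_le, StieltjesFunction.measure_def]
  refine (OuterMeasure.le_ofFunction (m_empty := f.length_empty)).2 fun s => ?_
  have hbot : (botSet : Set ℝ) = ∅ := by
    ext x
    simp [botSet]
  simp only [f.length_eq, hbot, sdiff_empty]
  refine le_iInf₂ fun a b => le_iInf fun hs => ?_
  rcases lt_or_ge a b with hab | hba
  · exact (measure_mono hs).trans (h a b hab)
  · rw [Ioc_eq_empty_of_le hba, subset_empty_iff] at hs
    simp [hs]

theorem MeasureTheory.Measure.le_smul_volume_of_forall_measure_Ioc_le {μ : Measure ℝ}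
    (c : NNReal) (h : ∀ a b, a < b → μ (Ioc a b) ≤ c * ENNReal.ofReal (b - a)) :
    μ ≤ c • volume := by
  rw [Real.volume_eq_stieltjes_id, ← StieltjesFunction.measure_smul]
  refine StieltjesFunction.le_measure_of_forall_measure_Ioc_le _ fun a b hab => ?_
  change μ (Ioc a b) ≤ ENNReal.ofReal (c * b - c * a)
  rw [← mul_sub, ENNReal.ofReal_mul (NNReal.coe_nonneg c), ENNReal.ofReal_coe_nnreal]
  exact h a b hab

lemma fstDigit_pow_mul {b r : ℕ} (hb : 1 < b) (hr : ¬b ∣ r) (k : ℕ) :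
    fstDigit b (b ^ k * r) = r % b := by
  have hr0 : r ≠ 0 := by
    rintro rfl
    exact hr (dvd_zero b)
  rw [fstDigit, padicValNat_base_pow_mul hb hr0, padicValNat.eq_zero_of_not_dvd hr, zero_add,
    Nat.mul_div_cancel_left _ (by positivity)]

lemma odd_fstDigit_four_iff {m : ℕ} (hm : m ≠ 0) :
    Odd (fstDigit 4 m) ↔ Even (padicValNat 2 m) := by
  obtain ⟨e, o, ho, rfl⟩ := Nat.exists_eq_two_pow_mul_odd hm
  have ho2 : ¬2 ∣ o := ho.not_two_dvd_nat
  rw [padicValNat_base_pow_mul one_lt_two ho.pos.ne', padicValNat.eq_zero_of_not_dvd ho2,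
    zero_add]
  rcases Nat.even_or_odd' e with ⟨k, rfl | rfl⟩
  · rw [pow_mul, show 2 ^ 2 = 4 by rfl, fstDigit_pow_mul (by norm_num) (by omega) k]
    simp only [even_two_mul, iff_true, Nat.odd_iff]
    omega
  · rw [pow_succ, pow_mul, show 2 ^ 2 = 4 by rfl, mul_assoc,
      fstDigit_pow_mul (by norm_num) (by omega) k]
    simp only [Nat.not_even_two_mul_add_one, iff_false, Nat.not_odd_iff_even, Nat.even_iff]
    omega

lemma odd_padicValNat_add_of_odd_fstDigit_add {p q : ℕ} (hp : p ≠ 0) (hq : q ≠ 0)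
    (h : Odd (fstDigit 4 p + fstDigit 4 q)) : Odd (padicValNat 2 p + padicValNat 2 q) := by
  have hp' := odd_fstDigit_four_iff hp
  have hq' := odd_fstDigit_four_iff hq
  simp only [Nat.odd_iff, Nat.even_iff] at h hp' hq' ⊢
  omega

def spreadBits (k : ℕ) : ℕ := Nat.ofDigits 4 (Nat.digits 2 k)

lemma spreadBits_eq (k : ℕ) : spreadBits k = k % 2 + 4 * spreadBits (k / 2) := by
  rcases Nat.eq_zero_or_pos k with rfl | hk
  · simp [spreadBits]
  · rw [spreadBits, Nat.digits_def' one_lt_two hk, Nat.ofDigits_cons, spreadBits]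

lemma spreadBits_injective : Injective spreadBits := by
  have hdigits (k : ℕ) : Nat.digits 4 (spreadBits k) = Nat.digits 2 k :=
    Nat.digits_ofDigits 4 (by norm_num) _
      (fun _ hl => (Nat.digits_lt_base one_lt_two hl).trans (by norm_num))
      (fun h => Nat.getLast_digit_ne_zero 2 (Nat.digits_ne_nil_iff_ne_zero.1 h))
  intro k k' h
  rw [← Nat.digits_inj_iff (b := 2), ← hdigits, ← hdigits, h]

lemma even_padicValInt_spreadBits_sub (k k' : ℕ) :
    Even (padicValInt 2 ((spreadBits k : ℤ) - spreadBits k')) := by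
  induction hn : k + k' using Nat.strong_induction_on generalizing k k' with
  | _ n ih =>
  set d : ℤ := (spreadBits (k / 2) : ℤ) - spreadBits (k' / 2)
  have hsub : (spreadBits k : ℤ) - spreadBits k'
      = ((k % 2 : ℕ) : ℤ) - (k' % 2 : ℕ) + d * 2 * 2 := by
    rw [spreadBits_eq k, spreadBits_eq k']
    push_cast
    ring
  by_cases hpar : k % 2 = k' % 2
  · rw [hsub, hpar, sub_self, zero_add]
    by_cases hd : d = 0
    · simp [hd]
    have hlt : k / 2 + k' / 2 < n := by
      by_contra! hle
      exact hd (by simp [d, show k = 0 by omega, show k' = 0 by omega])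
    have hval (c : ℤ) (hc : c ≠ 0) : padicValInt 2 (c * 2) = padicValInt 2 c + 1 := by
      exact_mod_cast padicValInt_mul_eq_succ (p := 2) c hc
    rw [hval _ (mul_ne_zero hd two_ne_zero), hval _ hd]
    exact (ih _ hlt _ _ rfl).add_one.add_one
  · rw [padicValInt.eq_zero_of_not_dvd]
    · exact ⟨0, rfl⟩
    · rw [hsub]
      push_cast
      omega

lemma eq_zero_of_mul_eq_mul_of_odd_padicValNat_add {p q : ℕ} {A B : ℤ} (hp : p ≠ 0)
    (hq : q ≠ 0) (hpq : Odd (padicValNat 2 p + padicValNat 2 q))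
    (hA : Even (padicValInt 2 A)) (hB : Even (padicValInt 2 B)) (h : q * A = p * B) :
    A = 0 := by
  by_contra hA0
  have hB0 : B ≠ 0 := by
    rintro rfl
    simp_all
  have hval := congrArg (padicValInt 2) h
  rw [padicValInt.mul (by exact_mod_cast hq) hA0, padicValInt.mul (by exact_mod_cast hp) hB0,
    padicValInt.of_nat, padicValInt.of_nat] at hval
  obtain ⟨a, ha⟩ := hA
  obtain ⟨b, hb⟩ := hB
  obtain ⟨c, hc⟩ := hpq
  omega

def squareLabel (p q : ℕ) (kl : ℕ × ℕ) : ℕ := q * spreadBits kl.1 + p * spreadBits kl.2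

lemma squareLabel_injective {p q : ℕ} (hp : p ≠ 0) (hq : q ≠ 0)
    (hpq : Odd (padicValNat 2 p + padicValNat 2 q)) : Injective (squareLabel p q) := by
  rintro ⟨k, l⟩ ⟨k', l'⟩ h
  have hZ : (q : ℤ) * (spreadBits k - spreadBits k') = p * (spreadBits l' - spreadBits l) := by
    have := congrArg (Nat.cast : ℕ → ℤ) h
    push_cast [squareLabel] at this
    linarith
  have hk := eq_zero_of_mul_eq_mul_of_odd_padicValNat_add hp hq hpq
    (even_padicValInt_spreadBits_sub _ _) (even_padicValInt_spreadBits_sub _ _) hZ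
  have hl := eq_zero_of_mul_eq_mul_of_odd_padicValNat_add hq hp (by rwa [add_comm])
    (even_padicValInt_spreadBits_sub _ _) (even_padicValInt_spreadBits_sub _ _) hZ.symm
  rw [sub_eq_zero, Nat.cast_inj] at hk hl
  rw [spreadBits_injective hk, spreadBits_injective hl]

noncomputable def binaryDigits (x : ℝ) (j : ℕ) : Bool := decide (⌊x * 2 ^ (j + 1)⌋ % 2 = 1)

lemma measurable_binaryDigits : Measurable binaryDigits :=
  measurable_pi_lambda _ fun _ =>
    (measurable_from_top (f := fun z : ℤ => decide (z % 2 = 1))).comp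
      (Int.measurable_floor.comp (measurable_id.mul_const _))

lemma binaryDigits_eq {x : ℝ} (hx : 0 ≤ x) (j : ℕ) :
    binaryDigits x j = decide (⌊x * 2 ^ (j + 1)⌋₊ % 2 = 1) := by
  rw [binaryDigits, ← Int.natCast_floor_eq_floor (by positivity), decide_eq_decide]
  omega

noncomputable def digitTerm (ε : ℕ → Bool) (j : ℕ) : ℝ := (if ε j then 1 else 0) / 4 ^ (j + 1)

noncomputable def quaternaryValue (ε : ℕ → Bool) : ℝ := ∑' j, digitTerm ε j

lemma hasSum_one_div_four_pow_succ : HasSum (fun j : ℕ => 1 / (4 : ℝ) ^ (j + 1)) (1 / 3) := by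
  have h := (hasSum_geometric_of_lt_one (r := (1 / 4 : ℝ)) (by norm_num) (by norm_num)).mul_left
    (1 / 4)
  simp only [one_div_pow, one_div_mul_one_div, ← pow_succ'] at h
  rwa [show (1 / 4 : ℝ) * (1 - 1 / 4)⁻¹ = 1 / 3 by norm_num] at h

lemma digitTerm_nonneg (ε : ℕ → Bool) (j : ℕ) : 0 ≤ digitTerm ε j := by
  unfold digitTerm
  positivity

lemma digitTerm_le (ε : ℕ → Bool) (j : ℕ) : digitTerm ε j ≤ 1 / 4 ^ (j + 1) := by
  unfold digitTerm
  gcongr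
  split_ifs <;> norm_num

lemma summable_digitTerm (ε : ℕ → Bool) : Summable (digitTerm ε) :=
  hasSum_one_div_four_pow_succ.summable.of_nonneg_of_le (digitTerm_nonneg ε) (digitTerm_le ε)

lemma quaternaryValue_nonneg (ε : ℕ → Bool) : 0 ≤ quaternaryValue ε :=
  tsum_nonneg (digitTerm_nonneg ε)

lemma quaternaryValue_le (ε : ℕ → Bool) : quaternaryValue ε ≤ 1 / 3 :=
  hasSum_one_div_four_pow_succ.tsum_eq ▸
    (summable_digitTerm ε).tsum_le_tsum (digitTerm_le ε) hasSum_one_div_four_pow_succ.summable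

lemma quaternaryValue_eq_sum_add (ε : ℕ → Bool) (n : ℕ) :
    quaternaryValue ε = ∑ j ∈ Finset.range n, digitTerm ε j
      + quaternaryValue (fun j => ε (j + n)) / 4 ^ n := by
  rw [quaternaryValue, ← (summable_digitTerm ε).sum_add_tsum_nat_add n, quaternaryValue,
    ← tsum_div_const]
  congr 2 with j
  rw [digitTerm, digitTerm, div_div, ← pow_add, add_right_comm]

lemma continuous_quaternaryValue : Continuous quaternaryValue :=
  continuous_tsum (fun j => (continuous_of_discreteTopology (f := fun b : Bool =>
      (if b then (1 : ℝ) else 0) / 4 ^ (j + 1))).comp (continuous_apply j))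
    hasSum_one_div_four_pow_succ.summable
    fun j ε => by rw [Real.norm_of_nonneg (digitTerm_nonneg ε j)]; exact digitTerm_le ε j

lemma sum_digitTerm_binaryDigits {x : ℝ} (hx : x ∈ Ico 0 1) (n : ℕ) :
    ∑ j ∈ Finset.range n, digitTerm (binaryDigits x) j = spreadBits ⌊x * 2 ^ n⌋₊ / 4 ^ n := by
  induction n with
  | zero => simp [Nat.floor_eq_zero.2 hx.2, spreadBits]
  | succ n ih =>
    set K := ⌊x * 2 ^ (n + 1)⌋₊ with hK_def
    have hK : ⌊x * 2 ^ n⌋₊ = K / 2 := by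
      rw [← Nat.floor_div_natCast, Nat.cast_ofNat, pow_succ, ← mul_assoc,
        mul_div_cancel_right₀ _ two_ne_zero]
    have hdigit : digitTerm (binaryDigits x) n = ((K % 2 : ℕ) : ℝ) / 4 ^ (n + 1) := by
      rw [digitTerm, binaryDigits_eq hx.1, ← hK_def]
      rcases Nat.mod_two_eq_zero_or_one K with h | h <;> simp [h]
    rw [Finset.sum_range_succ, ih, hdigit, hK, spreadBits_eq K]
    push_cast
    field_simp
    ring

lemma quaternaryValue_binaryDigits_sub_mem {x : ℝ} (hx : x ∈ Ico 0 1) (n : ℕ) :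
    4 ^ n * quaternaryValue (binaryDigits x) - spreadBits ⌊x * 2 ^ n⌋₊ ∈ Icc (0 : ℝ) (1 / 3) := by
  rw [quaternaryValue_eq_sum_add _ n, sum_digitTerm_binaryDigits hx n, mul_add,
    mul_div_cancel₀ _ (by positivity), mul_div_cancel₀ _ (by positivity), add_sub_cancel_left]
  exact ⟨quaternaryValue_nonneg _, quaternaryValue_le _⟩

noncomputable def quaternaryPairValue (u : ℝ) (z : ℝ × ℝ) : ℝ :=
  quaternaryValue (binaryDigits z.1) + u * quaternaryValue (binaryDigits z.2)

lemma measurable_quaternaryPairValue (u : ℝ) : Measurable (quaternaryPairValue u) := by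
  have hS : Measurable (quaternaryValue ∘ binaryDigits) :=
    continuous_quaternaryValue.measurable.comp measurable_binaryDigits
  exact (hS.comp measurable_fst).add ((hS.comp measurable_snd).const_mul u)

lemma muBes_eq_map (u : ℝ) :
    muBes u = (volume.restrict (Ico (0 : ℝ) 1 ×ˢ Ico (0 : ℝ) 1)).map (quaternaryPairValue u) := by
  have hsplit : (fun εε' : (ℕ → Bool) × (ℕ → Bool) => ∑' j : ℕ,
      ((if εε'.1 j then (1 : ℝ) else 0) + u * (if εε'.2 j then (1 : ℝ) else 0)) / 4 ^ (j + 1))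
      = fun εε' => quaternaryValue εε'.1 + u * quaternaryValue εε'.2 := by
    ext εε'
    rw [quaternaryValue, quaternaryValue, ← tsum_mul_left,
      ← (summable_digitTerm _).tsum_add ((summable_digitTerm _).mul_left u)]
    simp only [digitTerm, add_div, mul_div_assoc]
  have hmeas : Measurable fun εε' : (ℕ → Bool) × (ℕ → Bool) =>
      quaternaryValue εε'.1 + u * quaternaryValue εε'.2 :=
    ((continuous_quaternaryValue.comp continuous_fst).add
      (continuous_const.mul (continuous_quaternaryValue.comp continuous_snd))).measurable
  rw [muBes, hsplit]
  change Measure.map _ ((Measure.map binaryDigits _).prod (Measure.map binaryDigits _)) = _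
  rw [Measure.map_prod_map _ _ measurable_binaryDigits measurable_binaryDigits,
    Measure.map_map hmeas (measurable_binaryDigits.prodMap measurable_binaryDigits),
    Measure.prod_restrict, ← Measure.volume_eq_prod]
  rfl

lemma mul_quaternaryPairValue_sub_mem_Icc {p q : ℕ} (hq : q ≠ 0) {x y : ℝ} (hx : x ∈ Ico 0 1)
    (hy : y ∈ Ico 0 1) (n : ℕ) :
    q * 4 ^ n * quaternaryPairValue (p / q) (x, y)
        - squareLabel p q (⌊x * 2 ^ n⌋₊, ⌊y * 2 ^ n⌋₊) ∈ Icc (0 : ℝ) ((p + q) / 3) := by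
  obtain ⟨hx0, hx1⟩ := quaternaryValue_binaryDigits_sub_mem hx n
  obtain ⟨hy0, hy1⟩ := quaternaryValue_binaryDigits_sub_mem hy n
  have hscale : q * 4 ^ n * quaternaryPairValue (p / q) (x, y)
      = q * (4 ^ n * quaternaryValue (binaryDigits x))
        + p * (4 ^ n * quaternaryValue (binaryDigits y)) := by
    rw [quaternaryPairValue]
    field_simp
  rw [hscale, squareLabel]
  push_cast
  constructor <;> nlinarith [Nat.cast_nonneg (α := ℝ) p, Nat.cast_nonneg (α := ℝ) q]

def dyadicSquare (n : ℕ) (kl : ℕ × ℕ) : Set (ℝ × ℝ) :=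
  Ico (kl.1 / 2 ^ n : ℝ) ((kl.1 + 1) / 2 ^ n) ×ˢ Ico (kl.2 / 2 ^ n : ℝ) ((kl.2 + 1) / 2 ^ n)

lemma volume_dyadicSquare (n : ℕ) (kl : ℕ × ℕ) :
    volume (dyadicSquare n kl) = ENNReal.ofReal (1 / 4 ^ n) := by
  have hlen (m : ℕ) : ((m : ℝ) + 1) / 2 ^ n - m / 2 ^ n = 1 / 2 ^ n := by ring
  rw [dyadicSquare, Measure.volume_eq_prod, Measure.prod_prod, Real.volume_Ico, Real.volume_Ico,
    hlen, hlen, ← ENNReal.ofReal_mul (by positivity), one_div_mul_one_div, ← mul_pow]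
  norm_num

lemma mem_dyadicSquare_natFloor {x y : ℝ} (hx : 0 ≤ x) (hy : 0 ≤ y) (n : ℕ) :
    (x, y) ∈ dyadicSquare n (⌊x * 2 ^ n⌋₊, ⌊y * 2 ^ n⌋₊) := by
  simp only [dyadicSquare, mem_prod, mem_Ico, div_le_iff₀ (by positivity : (0 : ℝ) < 2 ^ n),
    lt_div_iff₀ (by positivity : (0 : ℝ) < 2 ^ n)]
  exact ⟨⟨Nat.floor_le (by positivity), Nat.lt_floor_add_one _⟩,
    Nat.floor_le (by positivity), Nat.lt_floor_add_one _⟩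

lemma natFloor_mul_two_pow_lt {x : ℝ} (hx : x ∈ Ico 0 1) (n : ℕ) : ⌊x * 2 ^ n⌋₊ < 2 ^ n := by
  rw [Nat.floor_lt (by have := hx.1; positivity)]
  push_cast
  exact mul_lt_of_lt_one_left (by positivity) hx.2

lemma card_le_sub_add_one_of_injOn {ι : Type*} {s : Finset ι} {f : ι → ℤ} {A B : ℝ}
    (hAB : A ≤ B) (hf : InjOn f s) (hs : ∀ i ∈ s, A < f i ∧ (f i : ℝ) ≤ B) :
    (s.card : ℝ) ≤ B - A + 1 := by
  have hcard : s.card ≤ (Finset.Ioc ⌊A⌋ ⌊B⌋).card := by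
    refine Finset.card_le_card_of_injOn f (fun i hi => ?_) hf
    simp [Int.floor_lt, Int.le_floor, hs i hi]
  rw [Int.card_Ioc] at hcard
  refine (Nat.cast_le.2 hcard).trans ?_
  rcases le_total (⌊B⌋ - ⌊A⌋) 0 with h | h
  · rw [Int.toNat_of_nonpos h]
    push_cast
    linarith
  · have hB := Int.floor_le B
    have hA := Int.lt_floor_add_one A
    rw [← Int.cast_natCast, Int.toNat_of_nonneg h]
    push_cast
    linarith

noncomputable def candidateSquares (p q n : ℕ) (a b : ℝ) : Finset (ℕ × ℕ) :=
  (Finset.range (2 ^ n) ×ˢ Finset.range (2 ^ n)).filter fun kl =>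
    q * 4 ^ n * a - (p + q) / 3 < squareLabel p q kl ∧ (squareLabel p q kl : ℝ) ≤ q * 4 ^ n * b

lemma card_candidateSquares_le {p q : ℕ} (hp : p ≠ 0) (hq : q ≠ 0)
    (hpq : Odd (padicValNat 2 p + padicValNat 2 q)) {a b : ℝ} (hab : a ≤ b) (n : ℕ) :
    ((candidateSquares p q n a b).card : ℝ) ≤ q * 4 ^ n * (b - a) + (p + q) / 3 + 1 := by
  have hAB : (q * 4 ^ n * a - (p + q) / 3 : ℝ) ≤ q * 4 ^ n * b := by
    have : q * 4 ^ n * a ≤ q * 4 ^ n * b := by gcongr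
    have : (0 : ℝ) ≤ (p + q) / 3 := by positivity
    linarith
  have hcard := card_le_sub_add_one_of_injOn (s := candidateSquares p q n a b) hAB
    (Nat.cast_injective.comp (squareLabel_injective hp hq hpq)).injOn
    fun kl hkl => by simpa using (Finset.mem_filter.1 hkl).2
  linarith

lemma preimage_Ioc_inter_subset_candidateSquares {p q : ℕ} (hq : q ≠ 0) (n : ℕ) (a b : ℝ) :
    quaternaryPairValue (p / q) ⁻¹' Ioc a b ∩ Ico 0 1 ×ˢ Ico 0 1
      ⊆ ⋃ kl ∈ candidateSquares p q n a b, dyadicSquare n kl := by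
  rintro ⟨x, y⟩ ⟨⟨hax, hxb⟩, hx, hy⟩
  obtain ⟨h0, h1⟩ := mul_quaternaryPairValue_sub_mem_Icc (p := p) hq hx hy n
  have ha : q * 4 ^ n * a < q * 4 ^ n * quaternaryPairValue (p / q) (x, y) := by gcongr
  have hb : q * 4 ^ n * quaternaryPairValue (p / q) (x, y) ≤ q * 4 ^ n * b := by gcongr
  refine mem_biUnion (Finset.mem_filter.2 ⟨Finset.mem_product.2
    ⟨Finset.mem_range.2 (natFloor_mul_two_pow_lt hx n),
      Finset.mem_range.2 (natFloor_mul_two_pow_lt hy n)⟩, by linarith, by linarith⟩)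
    (mem_dyadicSquare_natFloor hx.1 hy.1 n)

lemma volume_preimage_Ioc_inter_le_add {p q : ℕ} (hp : p ≠ 0) (hq : q ≠ 0)
    (hpq : Odd (padicValNat 2 p + padicValNat 2 q)) {a b : ℝ} (hab : a ≤ b) (n : ℕ) :
    volume (quaternaryPairValue (p / q) ⁻¹' Ioc a b ∩ Ico 0 1 ×ˢ Ico 0 1)
      ≤ ENNReal.ofReal (q * (b - a) + ((p + q) / 3 + 1) / 4 ^ n) := by
  have hcard := card_candidateSquares_le hp hq hpq hab n
  calc volume (quaternaryPairValue (p / q) ⁻¹' Ioc a b ∩ Ico 0 1 ×ˢ Ico 0 1)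
      ≤ ∑ kl ∈ candidateSquares p q n a b, volume (dyadicSquare n kl) :=
        (measure_mono (preimage_Ioc_inter_subset_candidateSquares hq n a b)).trans
          (measure_biUnion_finset_le _ _)
    _ = ENNReal.ofReal (candidateSquares p q n a b).card * ENNReal.ofReal (1 / 4 ^ n) := by
        simp [volume_dyadicSquare]
    _ ≤ ENNReal.ofReal ((q * 4 ^ n * (b - a) + (p + q) / 3 + 1) * (1 / 4 ^ n)) := by
        rw [ENNReal.ofReal_mul ((Nat.cast_nonneg _).trans hcard)]
        gcongr
    _ = ENNReal.ofReal (q * (b - a) + ((p + q) / 3 + 1) / 4 ^ n) := by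
        congr 1
        field_simp
        ring

lemma volume_preimage_Ioc_inter_le {p q : ℕ} (hp : p ≠ 0) (hq : q ≠ 0)
    (hpq : Odd (padicValNat 2 p + padicValNat 2 q)) {a b : ℝ} (hab : a ≤ b) :
    volume (quaternaryPairValue (p / q) ⁻¹' Ioc a b ∩ Ico 0 1 ×ˢ Ico 0 1)
      ≤ ENNReal.ofReal (q * (b - a)) := by
  refine ge_of_tendsto' (x := Filter.atTop) (ENNReal.tendsto_ofReal ?_)
    (volume_preimage_Ioc_inter_le_add hp hq hpq hab)
  simpa using tendsto_const_nhds.add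
    (tendsto_const_nhds.div_atTop (tendsto_pow_atTop_atTop_of_one_lt (by norm_num : (1 : ℝ) < 4)))

lemma muBes_le_smul_volume {p q : ℕ} (hp : p ≠ 0) (hq : q ≠ 0)
    (hpq : Odd (padicValNat 2 p + padicValNat 2 q)) :
    muBes (p / q) ≤ (q : NNReal) • volume := by
  refine Measure.le_smul_volume_of_forall_measure_Ioc_le q fun a b hab => ?_
  rw [muBes_eq_map, Measure.map_apply (measurable_quaternaryPairValue _) measurableSet_Ioc,
    Measure.restrict_apply' (measurableSet_Ico.prod measurableSet_Ico), ENNReal.coe_natCast,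
    ← ENNReal.ofReal_natCast, ← ENNReal.ofReal_mul (Nat.cast_nonneg q)]
  exact volume_preimage_Ioc_inter_le hp hq hpq hab.le

theorem muBes_absolutelyContinuous_of_odd_sum_general (p q : ℕ) (hp : 0 < p) (hq : 0 < q)
    (hodd : Odd (fstDigit 4 p + fstDigit 4 q)) :
    muBes ((p : ℝ) / q) ≪ volume ∧
      ∀ A : Set ℝ, MeasurableSet A →
        muBes ((p : ℝ) / q) A ≤ 2 * (q : ENNReal) * volume A := by
  have hle := muBes_le_smul_volume hp.ne' hq.ne'
    (odd_padicValNat_add_of_odd_fstDigit_add hp.ne' hq.ne' hodd)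
  refine ⟨Measure.absolutelyContinuous_of_le_smul hle, fun A _ => ?_⟩
  calc muBes ((p : ℝ) / q) A ≤ q * volume A := by simpa using hle A
    _ ≤ 2 * q * volume A := by
        gcongr
        exact le_mul_of_one_le_left' one_le_two

/-- If `u = p/q` with `p, q` positive coprime, `0 < u < 1`, and `p* + q*` odd, then
`μ_u` is absolutely continuous with respect to Lebesgue measure with density bounded by
`2q`: `μ_u(A) ≤ 2q·|A|` for every measurable `A`. -/
theorem muBes_absolutelyContinuous_of_odd_sum (p q : ℕ) (hp : 0 < p) (hq : 0 < q)
    (hpq : Nat.Coprime p q) (hlt : (p : ℝ) / q < 1)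
    (hodd : Odd (fstDigit 4 p + fstDigit 4 q)) :
    muBes ((p : ℝ) / q) ≪ volume ∧
      ∀ A : Set ℝ, MeasurableSet A →
        muBes ((p : ℝ) / q) A ≤ 2 * (q : ENNReal) * volume A :=
  muBes_absolutelyContinuous_of_odd_sum_general p q hp hq hodd
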